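/- arXiv:2210.10482 — 4 statements merged into one kernel-verified Lean document; each statement's English description precedes it below -/
import Mathlib

section
/- Let E be a real normed vector space, f : E →L[ℝ] ℝ a continuous linear functional, x, x' ∈ E and ε a real number with ε ≥ 0. Then the supremum of the targeted attack losses toward target x' equals |f x − f x'| + ε * ‖f‖: sSup { |f (x + δ) − f x'| : δ ∈ E, ‖δ‖ ≤ ε } = |f x − f x'| + ε * ‖f‖. -/
/-!
Write `c = f x - f x'`. The losses are `|c + t|` with `t` ranging over the symmetric set
`f '' closedBall 0 ε`, whose absolute values have least upper bound `ε * ‖f‖`. Over a symmetric set,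
`sup |c + t| = |c| + sup |t|`, because `|c| + |t| ≤ max |c + t| |c - t|`.
-/

open Metric

theorem abs_add_abs_le_max_abs_add_abs_sub {α : Type*} [AddCommGroup α] [LinearOrder α]
    [IsOrderedAddMonoid α] (a b : α) : |a| + |b| ≤ max |a + b| |a - b| := by
  rcases le_total 0 a with ha | ha <;> rcases le_total 0 b with hb | hb
  · rw [abs_of_nonneg ha, abs_of_nonneg hb]
    exact le_max_of_le_left (le_abs_self _)
  · rw [abs_of_nonneg ha, abs_of_nonpos hb, ← sub_eq_add_neg]
    exact le_max_of_le_right (le_abs_self _)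
  · rw [abs_of_nonpos ha, abs_of_nonneg hb, neg_add_eq_sub, ← neg_sub]
    exact le_max_of_le_right (neg_le_abs _)
  · rw [abs_of_nonpos ha, abs_of_nonpos hb, ← neg_add]
    exact le_max_of_le_left (neg_le_abs _)

theorem ContinuousLinearMap.isLUB_norm_image_closedBall {E F : Type*}
    [SeminormedAddCommGroup E] [NormedSpace ℝ E] [SeminormedAddCommGroup F] [NormedSpace ℝ F]
    (f : E →L[ℝ] F) {ε : ℝ} (hε : 0 ≤ ε) :
    IsLUB ((fun δ => ‖f δ‖) '' closedBall 0 ε) (ε * ‖f‖) := by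
  refine ⟨?_, fun b hb => ?_⟩
  · rintro - ⟨δ, hδ, rfl⟩
    rw [mul_comm]
    exact f.le_opNorm_of_le (mem_closedBall_zero_iff.1 hδ)
  have hb0 : 0 ≤ b := by simpa using hb ⟨0, mem_closedBall_self hε, rfl⟩
  rcases hε.eq_or_lt with rfl | hε
  · simpa using hb0
  rw [← le_div_iff₀' hε]
  refine f.opNorm_le_of_unit_norm (div_nonneg hb0 hε.le) fun y hy => ?_
  rw [le_div_iff₀' hε]
  have := hb ⟨ε • y, by simp [norm_smul, hy, abs_of_pos hε], rfl⟩
  simpa [norm_smul, abs_of_pos hε] using this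

theorem isLUB_abs_add_image {α : Type*} [AddCommGroup α] [LinearOrder α]
    [IsOrderedAddMonoid α] {c r : α} {T : Set α} (hT : ∀ t ∈ T, -t ∈ T)
    (hr : IsLUB (abs '' T) r) : IsLUB ((fun t => |c + t|) '' T) (|c| + r) := by
  refine ⟨?_, fun b hb => ?_⟩
  · rintro - ⟨t, ht, rfl⟩
    exact (abs_add_le c t).trans (by gcongr; exact hr.1 ⟨t, ht, rfl⟩)
  rw [← le_sub_iff_add_le']
  refine hr.2 ?_
  rintro - ⟨t, ht, rfl⟩
  rw [le_sub_iff_add_le']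
  refine (abs_add_abs_le_max_abs_add_abs_sub c t).trans (max_le (hb ⟨t, ht, rfl⟩) ?_)
  simpa [sub_eq_add_neg] using hb ⟨-t, hT t ht, rfl⟩

theorem targeted_attack_sup (E : Type*) [NormedAddCommGroup E] [NormedSpace ℝ E]
    (f : E →L[ℝ] ℝ) (x x' : E) (ε : ℝ) (hε : 0 ≤ ε) :
    sSup {y : ℝ | ∃ δ : E, ‖δ‖ ≤ ε ∧ y = |f (x + δ) - f x'|} = |f x - f x'| + ε * ‖f‖ := by
  have hset : {y : ℝ | ∃ δ : E, ‖δ‖ ≤ ε ∧ y = |f (x + δ) - f x'|}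
      = (fun t => |(f x - f x') + t|) '' (f '' closedBall 0 ε) := by
    ext y
    simp only [Set.image_image, Set.mem_image, mem_closedBall_zero_iff, Set.mem_ofPred_eq, map_add,
      add_sub_right_comm, eq_comm]
  have hsymm : ∀ t ∈ f '' closedBall 0 ε, -t ∈ f '' closedBall 0 ε := by
    rintro - ⟨δ, hδ, rfl⟩
    exact ⟨-δ, by simpa using hδ, map_neg f δ⟩
  have hlub : IsLUB (abs '' (f '' closedBall 0 ε)) (ε * ‖f‖) := by
    simpa only [Set.image_image, Real.norm_eq_abs] using f.isLUB_norm_image_closedBall hε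
  rw [hset]
  exact (isLUB_abs_add_image hsymm hlub).csSup_eq ⟨_, 0, ⟨0, mem_closedBall_self hε, map_zero f⟩, rfl⟩
end

section
/- Let E be a real normed vector space, f : E →L[ℝ] ℝ a continuous linear functional, x, x' ∈ E and ε a real number with ε ≥ 0. If f x ≠ f x', then the supremum of the targeted attack losses strictly exceeds the supremum of the positive-only attack losses: sSup { |f (x + δ) − f x'| : δ ∈ E, ‖δ‖ ≤ ε } > sSup { |f x − f (x + δ)| : δ ∈ E, ‖δ‖ ≤ ε }. -/
private lemma abs_add_same_sign {a c : ℝ} (h : 0 ≤ a * c) : |a + c| = |a| + |c| := by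
  rcases le_or_gt 0 a with ha | ha
  · rcases le_or_gt 0 c with hc | hc
    · rw [abs_of_nonneg ha, abs_of_nonneg hc, abs_of_nonneg (by linarith)]
    · have ha0 : a = 0 := by nlinarith
      simp [ha0]
  · have hc : c ≤ 0 := by nlinarith
    rw [abs_of_nonpos ha.le, abs_of_nonpos hc, abs_of_nonpos (by linarith)]
    ring

theorem targeted_attack_sup_gt_positive_only (E : Type*) [NormedAddCommGroup E]
    [NormedSpace ℝ E] (f : E →L[ℝ] ℝ) (x x' : E) (ε : ℝ) (hε : 0 ≤ ε)
    (hne : f x ≠ f x') :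
    sSup {y : ℝ | ∃ δ : E, ‖δ‖ ≤ ε ∧ y = |f (x + δ) - f x'|} >
      sSup {y : ℝ | ∃ δ : E, ‖δ‖ ≤ ε ∧ y = |f x - f (x + δ)|} := by
  set c : ℝ := f x - f x' with hc
  have hc0 : c ≠ 0 := sub_ne_zero.mpr hne
  have hcpos : 0 < |c| := abs_pos.mpr hc0
  set A := {y : ℝ | ∃ δ : E, ‖δ‖ ≤ ε ∧ y = |f (x + δ) - f x'|} with hA
  set B := {y : ℝ | ∃ δ : E, ‖δ‖ ≤ ε ∧ y = |f x - f (x + δ)|} with hB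
  have hBne : B.Nonempty := ⟨|f x - f (x + 0)|, 0, by simpa using hε, rfl⟩
  have hAbdd : BddAbove A := by
    refine ⟨‖f‖ * ε + |c|, ?_⟩
    rintro y ⟨δ, hδ, rfl⟩
    have h1 : f (x + δ) - f x' = f δ + c := by simp [hc]; ring
    rw [h1]
    calc |f δ + c| ≤ |f δ| + |c| := abs_add_le _ _
      _ ≤ ‖f‖ * ε + |c| := by
          have := f.le_opNorm δ
          have : |f δ| ≤ ‖f‖ * ε := le_trans (by simpa using this)
            (by nlinarith [f.opNorm_nonneg])
          linarith
  -- every b ∈ B gives b + |c| ∈ A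
  have key : ∀ b ∈ B, b + |c| ∈ A := by
    rintro b ⟨δ, hδ, rfl⟩
    have hfb : |f x - f (x + δ)| = |f δ| := by
      simp only [map_add]
      rw [show f x - (f x + f δ) = -(f δ) by ring, abs_neg]
    set δ' : E := if 0 ≤ f δ * c then δ else -δ with hδ'
    have hnorm : ‖δ'‖ ≤ ε := by
      rw [hδ']; split <;> simpa using hδ
    have habs : |f δ'| = |f δ| := by
      rw [hδ']; split <;> simp
    have hsign : 0 ≤ f δ' * c := by
      rw [hδ']; split
      · assumption
      · rename_i h
        push_neg at h
        simpa using le_of_lt (by nlinarith : (0:ℝ) < -(f δ * c))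
    refine ⟨δ', hnorm, ?_⟩
    have h1 : f (x + δ') - f x' = f δ' + c := by simp [hc]; ring
    rw [hfb, h1, abs_add_same_sign hsign, habs]
  have hle : sSup B ≤ sSup A - |c| := by
    apply csSup_le hBne
    intro b hb
    have := le_csSup hAbdd (key b hb)
    linarith
  linarith [hcpos, hle]
end

section
/- Let E be a real normed vector space, f : E →L[ℝ] ℝ a continuous linear functional, x, x_neg ∈ E and ε a real number with ε ≥ 0. Then sSup { |f x − f (x + δ)|^2 + |f x_neg − f (x + δ)|^2 : δ ∈ E, ‖δ‖ ≤ ε } = (ε * ‖f‖)^2 + (|f x_neg − f x| + ε * ‖f‖)^2. -/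
theorem contrastive_attack_sup (E : Type*) [NormedAddCommGroup E] [NormedSpace ℝ E]
    (f : E →L[ℝ] ℝ) (x x_neg : E) (ε : ℝ) (hε : 0 ≤ ε) :
    sSup {y : ℝ | ∃ δ : E, ‖δ‖ ≤ ε ∧
        y = |f x - f (x + δ)| ^ 2 + |f x_neg - f (x + δ)| ^ 2} =
      (ε * ‖f‖) ^ 2 + (|f x_neg - f x| + ε * ‖f‖) ^ 2 := by
  obtain ⟨c, hc⟩ : ∃ c : ℝ, c = f x_neg - f x := ⟨_, rfl⟩
  rw [← hc]
  have hval : ∀ δ : E, |f x - f (x + δ)| ^ 2 + |f x_neg - f (x + δ)| ^ 2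
      = (f δ) ^ 2 + |c - f δ| ^ 2 := by
    intro δ
    rw [map_add]
    have h1 : |f x - (f x + f δ)| = |f δ| := by
      rw [show f x - (f x + f δ) = -(f δ) by ring, abs_neg]
    have h2 : f x_neg - (f x + f δ) = c - f δ := by rw [hc]; ring
    rw [h1, h2, sq_abs]
  apply csSup_eq_of_forall_le_of_forall_lt_exists_gt
  · exact ⟨_, 0, by simpa using hε, rfl⟩
  · rintro y ⟨δ, hδ, rfl⟩
    rw [hval]
    have h1 : |f δ| ≤ ε * ‖f‖ := by
      calc |f δ| = ‖f δ‖ := rfl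
        _ ≤ ‖f‖ * ‖δ‖ := f.le_opNorm δ
        _ ≤ ε * ‖f‖ := by nlinarith [norm_nonneg f]
    have h2 : |c - f δ| ≤ |c| + |f δ| := abs_sub c (f δ)
    nlinarith [abs_nonneg (f δ), abs_nonneg c, abs_nonneg (c - f δ),
      sq_abs (f δ), sq_abs (c - f δ)]
  · intro w hw
    by_cases hM : ε * ‖f‖ = 0
    · refine ⟨_, ⟨0, by simpa using hε, rfl⟩, ?_⟩
      rw [hval]
      rw [hM] at hw
      simpa using hw
    · have hf0 : (0:ℝ) < ‖f‖ := by
        rcases (norm_nonneg f).lt_or_eq with h | h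
        · exact h
        · exfalso; exact hM (by rw [← h, mul_zero])
      have hε0 : (0:ℝ) < ε := by
        rcases hε.lt_or_eq with h | h
        · exact h
        · exfalso; exact hM (by rw [← h, zero_mul])
      obtain ⟨r', hr'pos, hr'lt, hwr'⟩ :
          ∃ r' : ℝ, 0 < r' ∧ r' < ‖f‖ ∧ w < (ε * r') ^ 2 + (|c| + ε * r') ^ 2 := by
        have habsc := abs_nonneg c
        have hDpos : 0 < (ε * ‖f‖) ^ 2 + (|c| + ε * ‖f‖) ^ 2 - w := by linarith
        have hKpos : 0 < 4 * ε ^ 2 * ‖f‖ + 2 * |c| * ε := by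
          nlinarith [mul_pos (mul_pos hε0 hε0) hf0, mul_nonneg (abs_nonneg c) hε]
        obtain ⟨D, hD⟩ : ∃ D : ℝ, D = (ε * ‖f‖) ^ 2 + (|c| + ε * ‖f‖) ^ 2 - w := ⟨_, rfl⟩
        obtain ⟨K, hK⟩ : ∃ K : ℝ, K = 4 * ε ^ 2 * ‖f‖ + 2 * |c| * ε := ⟨_, rfl⟩
        rw [← hD] at hDpos
        rw [← hK] at hKpos
        obtain ⟨θ, hθ⟩ : ∃ θ : ℝ, θ = min (‖f‖ / 2) (D / (2 * K)) := ⟨_, rfl⟩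
        have hθpos : 0 < θ := hθ ▸ lt_min (by positivity) (by positivity)
        have hb : θ ≤ ‖f‖ / 2 := hθ ▸ min_le_left _ _
        have hθK : 2 * K * θ ≤ D := by
          have h1 : θ ≤ D / (2 * K) := hθ ▸ min_le_right _ _
          rw [← le_div_iff₀' (by linarith)]
          exact h1
        refine ⟨‖f‖ - θ, by linarith, by linarith, ?_⟩
        have h2 : (ε * (‖f‖ - θ)) ^ 2 + (|c| + ε * (‖f‖ - θ)) ^ 2
            = (ε * ‖f‖) ^ 2 + (|c| + ε * ‖f‖) ^ 2 - θ * K + 2 * (ε * θ) ^ 2 := by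
          rw [hK]; ring
        rw [h2]
        have h3 : θ * K ≤ D / 2 := by nlinarith [hθK]
        rw [hD] at h3
        nlinarith [sq_nonneg (ε * θ)]
      obtain ⟨δ₀, hδ₀norm, hδ₀⟩ := f.exists_lt_apply_of_lt_opNorm hr'lt
      have hfd : r' < |f δ₀| := hδ₀
      have hsm : ‖ε • δ₀‖ ≤ ε := by
        rw [norm_smul, Real.norm_eq_abs, abs_of_nonneg hε]
        nlinarith
      obtain ⟨δ, hnorm, hct, htabs⟩ : ∃ δ : E, ‖δ‖ ≤ ε ∧ c * f δ ≤ 0 ∧ |f δ| = ε * |f δ₀| := by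
        by_cases h : c * f δ₀ ≤ 0
        · refine ⟨ε • δ₀, hsm, ?_, ?_⟩
          · rw [map_smul, smul_eq_mul]; nlinarith
          · rw [map_smul, smul_eq_mul, abs_mul, abs_of_nonneg hε]
        · push_neg at h
          refine ⟨-(ε • δ₀), by simpa using hsm, ?_, ?_⟩
          · rw [map_neg, map_smul, smul_eq_mul]; nlinarith
          · rw [map_neg, abs_neg, map_smul, smul_eq_mul, abs_mul, abs_of_nonneg hε]
      have htgt : ε * r' < |f δ| := by
        rw [htabs]
        exact (mul_lt_mul_iff_right₀ hε0).mpr hfd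
      refine ⟨_, ⟨δ, hnorm, rfl⟩, ?_⟩
      rw [hval]
      obtain ⟨t, ht⟩ : ∃ t : ℝ, t = f δ := ⟨_, rfl⟩
      rw [← ht] at hct htgt ⊢
      have hcmul : |c| * |t| = -(c * t) := by
        rw [← abs_mul, abs_of_nonpos hct]
      have habsc := abs_nonneg c
      have h1 : (0:ℝ) ≤ ε * r' := by positivity
      clear hval hδ₀ hfd hsm hδ₀norm hw hM hc hct htabs ht hnorm hr'lt hf0 hε0 hε
      clear δ δ₀ f x x_neg
      have e2 : (|c| + |t|) ^ 2 = (c - t) ^ 2 := by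
        have s1 := sq_abs c
        have s2 := sq_abs t
        linear_combination s1 + s2 + 2 * hcmul
      calc w < (ε * r') ^ 2 + (|c| + ε * r') ^ 2 := hwr'
        _ ≤ |t| ^ 2 + (|c| + |t|) ^ 2 := by nlinarith [htgt, h1, habsc, abs_nonneg t]
        _ = t ^ 2 + (c - t) ^ 2 := by rw [sq_abs, e2]
        _ = t ^ 2 + |c - t| ^ 2 := by rw [sq_abs]
end

section
/- Let E be a real normed vector space, f : E →L[ℝ] ℝ a continuous linear functional, x, x_neg ∈ E and ε a real number. If ε > 0 and f ≠ 0, then sSup { |f x − f (x + δ)|^2 + |f x_neg − f (x + δ)|^2 : δ ∈ E, ‖δ‖ ≤ ε } > sSup { |f x − f (x + δ)|^2 : δ ∈ E, ‖δ‖ ≤ ε }. -/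
set_option maxHeartbeats 1000000 in
theorem contrastive_attack_sup_gt_positive_only (E : Type*) [NormedAddCommGroup E]
    [NormedSpace ℝ E] (f : E →L[ℝ] ℝ) (x x_neg : E) (ε : ℝ) (hε : 0 < ε)
    (hf : f ≠ 0) :
    sSup {y : ℝ | ∃ δ : E, ‖δ‖ ≤ ε ∧
        y = |f x - f (x + δ)| ^ 2 + |f x_neg - f (x + δ)| ^ 2} >
      sSup {y : ℝ | ∃ δ : E, ‖δ‖ ≤ ε ∧ y = |f x - f (x + δ)| ^ 2} := by
  have hfnorm : 0 < ‖f‖ := norm_pos_iff.mpr hf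
  set M : ℝ := ε * ‖f‖ with hM
  have hMpos : 0 < M := mul_pos hε hfnorm
  set c : ℝ := f x_neg - f x with hc
  have key : ∀ δ : E, ‖δ‖ ≤ ε → |f x - f (x + δ)| ≤ M := by
    intro δ hδ
    have : f x - f (x + δ) = -(f δ) := by simp [map_add]
    rw [this, abs_neg]
    calc |f δ| = ‖f δ‖ := (Real.norm_eq_abs _).symm
      _ ≤ ‖f‖ * ‖δ‖ := f.le_opNorm δ
      _ ≤ ‖f‖ * ε := by nlinarith
      _ = M := by rw [hM]; ring
  -- upper bound for the positive-only sup
  have h1 : sSup {y : ℝ | ∃ δ : E, ‖δ‖ ≤ ε ∧ y = |f x - f (x + δ)| ^ 2} ≤ M ^ 2 := by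
    apply csSup_le
    · exact ⟨|f x - f (x + 0)| ^ 2, 0, by simp [le_of_lt hε]⟩
    · rintro y ⟨δ, hδ, rfl⟩
      have h := key δ hδ
      have := abs_nonneg (f x - f (x + δ))
      nlinarith
  -- find a good δ
  have hr : ‖f‖ / Real.sqrt 2 < ‖f‖ := by
    rw [div_lt_iff₀ (by positivity)]
    nlinarith [Real.lt_sqrt (x := 1) (y := 2) zero_le_one, Real.sq_sqrt (by norm_num : (2:ℝ) ≥ 0) , Real.sqrt_nonneg 2]
  obtain ⟨z, hz1, hz2⟩ := f.exists_lt_apply_of_lt_opNorm hr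
  rw [Real.norm_eq_abs] at hz2
  have hfz2 : (‖f‖ / Real.sqrt 2) ^ 2 < (f z) ^ 2 := by
    have h0 : 0 ≤ ‖f‖ / Real.sqrt 2 := by positivity
    calc (‖f‖ / Real.sqrt 2) ^ 2 < |f z| ^ 2 := by nlinarith [abs_nonneg (f z)]
      _ = (f z) ^ 2 := sq_abs _
  have hsq2 : (Real.sqrt 2) ^ 2 = 2 := Real.sq_sqrt (by norm_num)
  have hfz2' : ‖f‖ ^ 2 < 2 * (f z) ^ 2 := by
    have hs : (0:ℝ) < Real.sqrt 2 := by positivity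
    have := hfz2
    rw [div_pow, hsq2, div_lt_iff₀ (by norm_num : (0:ℝ) < 2)] at this
    linarith
  set s : ℝ := if 0 ≤ c * f z then -ε else ε with hs
  set δ : E := s • z with hδdef
  have hsabs : |s| = ε := by
    rw [hs]; split <;> simp [abs_of_pos hε, abs_of_neg (neg_neg_iff_pos.mpr hε)]
  have hδnorm : ‖δ‖ ≤ ε := by
    rw [hδdef, norm_smul, Real.norm_eq_abs, hsabs]
    nlinarith [norm_nonneg z]
  have hfδ : f δ = s * f z := by simp [hδdef]
  have hsign : c * f δ ≤ 0 := by
    rw [hfδ, hs]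
    split
    · rename_i h; nlinarith
    · rename_i h; push_neg at h; nlinarith
  -- value at δ
  have hval1 : f x - f (x + δ) = -(f δ) := by simp [map_add]
  have hval2 : f x_neg - f (x + δ) = c - f δ := by simp [map_add, hc]; ring
  have hbig : M ^ 2 < |f x - f (x + δ)| ^ 2 + |f x_neg - f (x + δ)| ^ 2 := by
    rw [hval1, hval2, abs_neg, sq_abs, sq_abs, hfδ]
    have hs2 : s ^ 2 = ε ^ 2 := by rw [hs]; split <;> ring
    have hMsq : M ^ 2 = ε ^ 2 * ‖f‖ ^ 2 := by rw [hM]; ring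
    have hcross : c * (s * f z) ≤ 0 := by rw [← hfδ]; exact hsign
    nlinarith [sq_nonneg c, sq_nonneg (s * f z), mul_pos (mul_pos hε hε) (sub_pos.mpr hfz2'), sq_nonneg ε]
  -- bounded above for second set
  have hbdd : BddAbove {y : ℝ | ∃ δ : E, ‖δ‖ ≤ ε ∧
      y = |f x - f (x + δ)| ^ 2 + |f x_neg - f (x + δ)| ^ 2} := by
    refine ⟨M ^ 2 + (|c| + M) ^ 2, ?_⟩
    rintro y ⟨d, hd, rfl⟩
    have h1' := key d hd
    have h2' : |f x_neg - f (x + d)| ≤ |c| + M := by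
      have : f x_neg - f (x + d) = c + (f x - f (x + d)) := by simp [map_add, hc]; ring
      rw [this]
      calc |c + (f x - f (x + d))| ≤ |c| + |f x - f (x + d)| := abs_add_le _ _
        _ ≤ |c| + M := by linarith
    exact add_le_add (pow_le_pow_left₀ (abs_nonneg _) h1' 2)
      (pow_le_pow_left₀ (abs_nonneg _) h2' 2)
  have h2 : M ^ 2 < sSup {y : ℝ | ∃ δ : E, ‖δ‖ ≤ ε ∧
      y = |f x - f (x + δ)| ^ 2 + |f x_neg - f (x + δ)| ^ 2} := by
    calc M ^ 2 < |f x - f (x + δ)| ^ 2 + |f x_neg - f (x + δ)| ^ 2 := hbig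
      _ ≤ _ := le_csSup hbdd ⟨δ, hδnorm, rfl⟩
  exact lt_of_le_of_lt h1 h2
end
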